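/- arXiv:2510.02493 — 2 statements merged into one kernel-verified Lean document; each statement's English description precedes it below -/
import Mathlib

section
/- If V(s_H) = 0 for the terminal state of every expert trajectory, then the reduced IQ-Learn objective J*(Q) = E_{τ∼ρ_E}[Σ_{t=0}^{H−1}(Q(s_t,a_t) − V(s_{t+1}))] − E_{s_0∼ρ_0}[V(s_0)] equals the expert log-likelihood E_{τ∼ρ_E}[Σ_{t=0}^{H−1} log π_Q(a_t|s_t)], where π_Q(a|s) = exp(Q(s,a) − V(s)) and V(s) = log Σ_a exp Q(s,a). Hence maximizing J* over Q is equivalent to minimizing the token-level SFT cross-entropy loss. -/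
/-- On the finite-horizon deterministic token MDP, if `V(s_H) = 0` on every
expert trajectory, then the reduced IQ-Learn objective
`J*(Q) = E_{τ∼ρ_E}[∑_{t<H}(Q(s_t,a_t) − V(s_{t+1}))] − E_{s_0∼ρ_0}[V(s_0)]`
equals the expert log-likelihood `E_{τ∼ρ_E}[∑_{t<H} log π_Q(a_t|s_t)]`.
Expert trajectories are modeled by a finite family `ι` with weights `w` summing to 1;
the initial-state distribution `ρ_0` is the one induced by `ρ_E`. -/
theorem iq_learn_reduced_objective_eq_sft_loglikelihood
    {S A : Type*} [Fintype A] [Nonempty A]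
    (f : S → A → S) (Q : S → A → ℝ) (V : S → ℝ) (πQ : S → A → ℝ)
    (hV : ∀ s, V s = Real.log (∑ a : A, Real.exp (Q s a)))
    (hπ : ∀ s a, πQ s a = Real.exp (Q s a - V s))
    (H : ℕ) (hH : 0 < H)
    {ι : Type*} [Fintype ι] (w : ι → ℝ) (hw0 : ∀ i, 0 ≤ w i) (hw1 : ∑ i : ι, w i = 1)
    (s : ι → ℕ → S) (a : ι → ℕ → A)
    (htraj : ∀ i, ∀ t < H, s i (t + 1) = f (s i t) (a i t))
    (hterm : ∀ i, w i ≠ 0 → V (s i H) = 0) :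
    (∑ i : ι, w i * ∑ t ∈ Finset.range H, (Q (s i t) (a i t) - V (s i (t + 1))))
      - (∑ i : ι, w i * V (s i 0))
      = ∑ i : ι, w i * ∑ t ∈ Finset.range H, Real.log (πQ (s i t) (a i t)) := by
  rw [← Finset.sum_sub_distrib]
  apply Finset.sum_congr rfl
  intro i _
  by_cases hwi : w i = 0
  · simp [hwi]
  · rw [← mul_sub]
    congr 1
    have hlog : ∀ t, Real.log (πQ (s i t) (a i t)) = Q (s i t) (a i t) - V (s i t) := by
      intro t; rw [hπ, Real.log_exp]
    simp only [hlog, sub_sub]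
    rw [Finset.sum_sub_distrib, Finset.sum_sub_distrib]
    have key : (∑ t ∈ Finset.range H, V (s i (t + 1))) + V (s i 0)
        = (∑ t ∈ Finset.range H, V (s i t)) + V (s i H) := by
      rw [← Finset.sum_range_succ' (fun t => V (s i t)) H, Finset.sum_range_succ]
    rw [hterm i hwi, add_zero] at key
    linarith
end

section
/- Potential-based shaping preserves soft-optimal policies: in a finite-horizon deterministic MDP, let r^F(s,a) = r(s,a) + F(f(s,a)) − F(s) for a potential F : S → ℝ with F = 0 on terminal states. If Q and Q^F are the soft Q-functions satisfying Q(s,a) = r(s,a) + V(f(s,a)) and Q^F(s,a) = r^F(s,a) + V^F(f(s,a)) (with V, V^F the respective log-sum-exp values, zero at terminal states), then Q^F(s,a) = Q(s,a) − F(s) for all (s,a), and hence the induced Boltzmann policies coincide: π_{Q^F}(a|s) = π_Q(a|s). -/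
/-- States of the deterministic trajectory generated from `s0` by actions `a`. -/
def traj {S A : Type*} (f : S → A → S) (s0 : S) (a : ℕ → A) : ℕ → S
  | 0 => s0
  | (t + 1) => f (traj f s0 a t) (a t)


lemma traj_shift {S A : Type*} (f : S → A → S) (s : S) (b : ℕ → A) (k : ℕ) :
    traj f s b (k + 1) = traj f (f s (b 0)) (fun t => b (t + 1)) k := by
  induction k with
  | zero => rfl
  | succ m ih =>
    show f (traj f s b (m + 1)) (b (m + 1)) = _
    rw [ih]; rfl

/-- Potential-based shaping preserves soft-optimal policies. In a
finite-horizon deterministic MDP (every state reaches the terminal layer in at most `H`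
steps under `f`), with shaped reward `r^F(s,a) = r(s,a) + F(f(s,a)) − F(s)` for a
potential `F` vanishing on terminal states, the soft Q-functions (defined by the soft
Bellman relations, with log-sum-exp values at nonterminal states and zero values at
terminal states) satisfy `Q^F(s,a) = Q(s,a) − F(s)`, and the induced Boltzmann policies
coincide: `exp(Q^F(s,a) − V^F(s)) = exp(Q(s,a) − V(s))`. -/
theorem potential_shaping_preserves_soft_optimal_policy
    {S A : Type*} [Fintype A] [Nonempty A]
    (f : S → A → S) (terminal : S → Prop)
    (H : ℕ) (hreach : ∀ (s : S) (a : ℕ → A), ∃ n ≤ H, terminal (traj f s a n))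
    (r : S → A → ℝ) (F : S → ℝ) (hF0 : ∀ s, terminal s → F s = 0)
    (rF : S → A → ℝ) (hrF : ∀ s a, rF s a = r s a + F (f s a) - F s)
    (Q QF : S → A → ℝ) (V VF : S → ℝ)
    (hV : ∀ s, ¬ terminal s → V s = Real.log (∑ a : A, Real.exp (Q s a)))
    (hVterm : ∀ s, terminal s → V s = 0)
    (hQ : ∀ s a, Q s a = r s a + V (f s a))
    (hVF : ∀ s, ¬ terminal s → VF s = Real.log (∑ a : A, Real.exp (QF s a)))
    (hVFterm : ∀ s, terminal s → VF s = 0)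
    (hQF : ∀ s a, QF s a = rF s a + VF (f s a)) :
    (∀ s a, QF s a = Q s a - F s) ∧
    (∀ s a, Real.exp (QF s a - VF s) = Real.exp (Q s a - V s)) := by
  classical
  have key : ∀ n, ∀ s : S, (∀ a : ℕ → A, ∃ k ≤ n, terminal (traj f s a k)) →
      VF s = V s - F s := by
    intro n
    induction n with
    | zero =>
      intro s hs
      by_cases ht : terminal s
      · rw [hVFterm s ht, hVterm s ht, hF0 s ht]; ring
      · exfalso
        obtain ⟨k, hk, hterm⟩ := hs (fun _ => Classical.arbitrary A)
        interval_cases k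
        exact ht hterm
    | succ n ih =>
      intro s hs
      by_cases ht : terminal s
      · rw [hVFterm s ht, hVterm s ht, hF0 s ht]; ring
      · have hQFa : ∀ a : A, QF s a = Q s a - F s := by
          intro a
          have hnext : ∀ a' : ℕ → A, ∃ k ≤ n, terminal (traj f (f s a) a' k) := by
            intro a'
            obtain ⟨k, hk, hterm⟩ := hs (fun t => if t = 0 then a else a' (t - 1))
            match k, hk with
            | 0, _ => exact absurd hterm ht
            | m + 1, hk =>
              refine ⟨m, by omega, ?_⟩
              rw [traj_shift] at hterm
              simpa using hterm
          have hV' := ih (f s a) hnext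
          rw [hQF, hrF, hQ, hV']; ring
        rw [hVF s ht, hV s ht]
        have hsum : (∑ a : A, Real.exp (QF s a))
            = Real.exp (-F s) * ∑ a : A, Real.exp (Q s a) := by
          rw [Finset.mul_sum]
          refine Finset.sum_congr rfl fun a _ => ?_
          rw [hQFa a, ← Real.exp_add]
          ring_nf
        have hpos : (0 : ℝ) < ∑ a : A, Real.exp (Q s a) :=
          Finset.sum_pos (fun a _ => Real.exp_pos _) Finset.univ_nonempty
        rw [hsum, Real.log_mul (Real.exp_ne_zero _) hpos.ne', Real.log_exp]
        ring
  have hVall : ∀ s, VF s = V s - F s := fun s => key H s (hreach s)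
  have hQall : ∀ s a, QF s a = Q s a - F s := by
    intro s a
    rw [hQF, hrF, hQ, hVall (f s a)]; ring
  refine ⟨hQall, fun s a => ?_⟩
  rw [hQall, hVall]
  ring_nf
end
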